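/- Let E be an elliptic curve over a finite field k of characteristic p with Δ_E < 0, and N a positive integer not divisible by p. Then the matrix σ_E reduces to a scalar matrix modulo N (equivalently, N divides both b_E and Δ_E(b_E² − Δ_E)/(4b_E³)) if and only if N divides b_E. -/

import Mathlib

open Polynomial WeierstrassCurve NumberField
open scoped WeierstrassCurve.Affine

noncomputable section

/-- The `N`-torsion subgroup of an abelian group `G`. -/
def ntors (G : Type*) [AddCommGroup G] (N : ℕ) : AddSubgroup G where
  carrier := {x | N • x = 0}
  zero_mem' := smul_zero N
  add_mem' := fun {a b} ha hb => by
    simp only [Set.mem_setOf_eq] at *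
    rw [smul_add, ha, hb, add_zero]
  neg_mem' := fun {a} ha => by
    simp only [Set.mem_setOf_eq] at *
    rw [smul_neg, ha, neg_zero]

/-- The restriction of an additive endomorphism to the `N`-torsion subgroup. -/
def torsRes {G : Type*} [AddCommGroup G] (φ : G →+ G) (N : ℕ) :
    ntors G N →+ ntors G N :=
  (φ.domRestrict (ntors G N)).codRestrict _ (fun x => by
    have hx : N • (x : G) = 0 := x.2
    show N • φ (x : G) = 0
    rw [← map_nsmul, hx, map_zero])

/-- The arithmetic Frobenius of the algebraic closure of a finite field `k` of cardinality
`p ^ r`, i.e. the map `x ↦ x ^ (p ^ r)`, as a `k`-algebra homomorphism. -/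
def arithFrob (p r : ℕ) [Fact p.Prime] (k : Type*) [Field k] [Fintype k] [CharP k p]
    (hcard : Fintype.card k = p ^ r) :
    AlgebraicClosure k →ₐ[k] AlgebraicClosure k where
  __ := iterateFrobenius (AlgebraicClosure k) p r
  commutes' := fun c => by
    simp only [iterateFrobenius_def, RingHom.toMonoidHom_eq_coe, OneHom.toFun_eq_coe,
      MonoidHom.toOneHom_coe, MonoidHom.coe_coe]
    rw [← map_pow, ← hcard, FiniteField.pow_card]

open Classical in
/-- The action of the arithmetic Frobenius `Frob_k` (equivalently, of the Frobenius isogeny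
`π_E`) on the group of geometric points of a Weierstrass curve over a finite field `k`. -/
def frobPts (p r : ℕ) [Fact p.Prime] (k : Type*) [Field k] [Fintype k] [CharP k p]
    (hcard : Fintype.card k = p ^ r) (W : WeierstrassCurve k) :
    Affine.Point (WeierstrassCurve.baseChange W (AlgebraicClosure k)) →+
      Affine.Point (WeierstrassCurve.baseChange W (AlgebraicClosure k)) :=
  Affine.Point.map (W' := W) (arithFrob p r k hcard)

/-- The "error term" `a_E = |k| + 1 - |E(k)|` of an elliptic curve over a finite field. -/
def frobTrace (k : Type*) [Field k] [Fintype k] (W : WeierstrassCurve k) : ℤ :=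
  (Fintype.card k : ℤ) + 1 - Nat.card W.toAffine.Point

/-- The discriminant `Δ_E = a_E ^ 2 - 4 |k|` of the characteristic polynomial
`f_E(x) = x² - a_E x + |k|` of the Frobenius. -/
def frobDisc (k : Type*) [Field k] [Fintype k] (W : WeierstrassCurve k) : ℤ :=
  frobTrace k W ^ 2 - 4 * (Fintype.card k : ℤ)

/-- The index `b_E = [R_E : ℤ[π_E]]` of the subring generated by the Frobenius isogeny in the
endomorphism ring, as a natural number (with the convention that an infinite index is `0`). -/
def frobIndex (R : Type*) [Ring R] (π : R) : ℕ :=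
  (Subring.closure ({π} : Set R)).toAddSubgroup.index

/-- The matrix `σ_E` associated to the data `a = a_E`, `Δ = Δ_E` and `b = b_E`. -/
def sigmaMat (a Δ b : ℤ) : Matrix (Fin 2) (Fin 2) ℤ :=
  if Δ < 0 then
    !![(a * b - Δ) / (2 * b), Δ * (b ^ 2 - Δ) / (4 * b ^ 3);
       b, (a * b + Δ) / (2 * b)]
  else !![a / 2, 0; 0, a / 2]

/-- `ActsByMatrixOn φ N M` says that there is a `ℤ/Nℤ`-basis `(P, Q)` of the `N`-torsion
subgroup in whose coordinates the additive endomorphism `φ` acts via the matrix `M` mod `N`. -/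
def ActsByMatrixOn {G : Type*} [AddCommGroup G] (φ : G →+ G) (N : ℕ)
    (M : Matrix (Fin 2) (Fin 2) ℤ) : Prop :=
  ∃ P Q : G, N • P = 0 ∧ N • Q = 0 ∧
    (∀ T : G, N • T = 0 → ∃ a b : ℤ, T = a • P + b • Q) ∧
    (∀ a b : ℤ, a • P + b • Q = 0 → (N : ℤ) ∣ a ∧ (N : ℤ) ∣ b) ∧
    φ P = M 0 0 • P + M 1 0 • Q ∧ φ Q = M 0 1 • P + M 1 1 • Q

/-- An elliptic curve over a finite field of size `p ^ r`, with error term `a` and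
`j`-invariant `j`, is special if `p ≡ 3 mod 4`, `r` is odd, its Weil polynomial is
`x² + p^r` (that is, `a = 0`) and `j = 1728`. -/
def IsSpecial (p r : ℕ) (a : ℤ) {k : Type*} [CommRing k] (j : k) : Prop :=
  p % 4 = 3 ∧ Odd r ∧ a = 0 ∧ j = (1728 : k)

/-- `HasCMByDisc R D` says that the imaginary quadratic order `O_D` of discriminant `D` admits
a maximal embedding into the ring `R`: there is `ω ∈ R` satisfying the minimal polynomial of
`(D + √D)/2`, generating a subring `ℤ[ω] ≅ O_D` of rank two, such that every element of `R`
lying in `ℤ[ω] ⊗ ℚ` already lies in `ℤ[ω]`. Applied to the geometric endomorphism ring of an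
elliptic curve, this is Complex Multiplication by `O_D`. -/
def HasCMByDisc (R : Type*) [Ring R] (D : ℤ) : Prop :=
  ∃ ω : R, ω ^ 2 - D • ω + (D * (D - 1) / 4) • (1 : R) = 0 ∧
    (∀ a b : ℤ, a • (1 : R) + b • ω = 0 → a = 0 ∧ b = 0) ∧
    ∀ (ψ : R) (n : ℤ), n ≠ 0 → n • ψ ∈ Subring.closure ({ω} : Set R) →
      ψ ∈ Subring.closure ({ω} : Set R)

/-- `IsHilbertClassPolys CM P` says that, for every negative discriminant `D`, `P D` is the
Hilbert Class Polynomial of the order `O_D`: the monic squarefree integer polynomial whose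
complex roots are exactly the `j`-invariants of the complex elliptic curves with Complex
Multiplication by `O_D`, where the Complex Multiplication predicate for complex elliptic
curves is the given `CM`. -/
def IsHilbertClassPolys (CM : WeierstrassCurve ℂ → ℤ → Prop) (P : ℤ → Polynomial ℤ) : Prop :=
  ∀ D : ℤ, D < 0 → (D % 4 = 0 ∨ D % 4 = 1) →
    (P D).Monic ∧ Squarefree (P D) ∧
      ∀ z : ℂ, aeval z (P D) = 0 ↔
        ∃ (A : WeierstrassCurve ℂ) (hA : A.IsElliptic), CM A D ∧ @WeierstrassCurve.j ℂ _ A hA = z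

/-- The polynomial `𝒫_D = ∏_{O_D ⊆ O_{D'}} P_{D'}`, the product of the Hilbert Class
Polynomials of all the orders `O_{D'}` containing `O_D` (i.e. `D = D' h²` for a positive
integer `h`), with the conventions `𝒫_0 = 0` and `𝒫_D = 1` for `D ≡ 2, 3 mod 4`. -/
def calP (P : ℤ → Polynomial ℤ) (D : ℤ) : Polynomial ℤ :=
  if D = 0 then 0
  else if D % 4 = 0 ∨ D % 4 = 1 then
    letI := Classical.decPred fun h : ℕ =>
      0 < h ∧ ((h : ℤ)) ^ 2 ∣ D ∧ ((D / (h : ℤ) ^ 2) % 4 = 0 ∨ (D / (h : ℤ) ^ 2) % 4 = 1)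
    ∏ h ∈ Finset.filter (fun h : ℕ =>
        0 < h ∧ ((h : ℤ)) ^ 2 ∣ D ∧ ((D / (h : ℤ) ^ 2) % 4 = 0 ∨ (D / (h : ℤ) ^ 2) % 4 = 1))
        (Finset.range (D.natAbs + 1)),
      P (D / (h : ℤ) ^ 2)
  else 1

/-- The quantity `b = sup { h > 0 : h² ∣ Δ and 𝒫_{Δ/h²}(j) ≡ 0 mod p }` of Theorem 6.1,
computed in the residue field `k` (so that `𝒫(j) ≡ 0 mod p` reads `𝒫(j) = 0` in `k`). -/
def bSup (P : ℤ → Polynomial ℤ) {k : Type*} [CommRing k] (Δ : ℤ) (j : k) : ℕ :=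
  sSup {h : ℕ | 0 < h ∧ ((h : ℤ)) ^ 2 ∣ Δ ∧ aeval j (calP P (Δ / (h : ℤ) ^ 2)) = 0}

/-- `IsFrobEndRing p π act φ` says that the ring `R` (implicit in `act`), acting on the
geometric points via `act` and containing the distinguished element `π` acting as the
arithmetic Frobenius `φ`, behaves like the endomorphism ring `End_k(E)`: the action is
faithful, commutes with Frobenius, and (Tate's theorem, in level-wise form) for each prime
`ℓ ≠ p` the natural map `R ⊗ ℤℓ → End_{ℤℓ[G_k]}(Tℓ E)` is an isomorphism. -/
structure IsFrobEndRing (p : ℕ) {G R : Type*} [AddCommGroup G] [Ring R] (π : R)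
    (act : R →+* AddMonoid.End G) (φ : G →+ G) : Prop where
  inj : Function.Injective act
  frob_eq : ∀ x : G, act π x = φ x
  comm : ∀ (a : R) (x : G), act a (φ x) = φ (act a x)
  tate_surj : ∀ ℓ : ℕ, ℓ.Prime → ℓ ≠ p → ∀ n : ℕ,
    ∀ ψ : AddMonoid.End (ntors G (ℓ ^ n)),
      (∀ x, ψ (torsRes φ (ℓ ^ n) x) = torsRes φ (ℓ ^ n) (ψ x)) →
      ∃ a : R, ∀ x : ntors G (ℓ ^ n), (ψ x : G) = act a (x : G)
  tate_ker : ∀ ℓ : ℕ, ℓ.Prime → ℓ ≠ p → ∀ n : ℕ, ∀ a : R,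
    (∀ x : G, (ℓ ^ n) • x = 0 → act a x = 0) ↔ ∃ c : R, a = (ℓ ^ n : ℤ) • c

/-- A prime ideal `p` of `A` splits completely in (the integral closure of `A` in a finite
extension, given by) `B` if there is at least one maximal ideal of `B` above `p`, and every
maximal ideal of `B` above `p` has ramification index one and residue degree one. -/
def SplitsCompletelyIn {A B : Type*} [CommRing A] [CommRing B] (f : A →+* B)
    (p : Ideal A) : Prop :=
  (∃ P : Ideal B, P.IsMaximal ∧ Ideal.comap f P = p) ∧
    ∀ P : Ideal B, P.IsMaximal → Ideal.comap f P = p →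
      letI := f.toAlgebra
      Ideal.ramificationIdx' p P = 1 ∧ Ideal.inertiaDeg' p P = 1

/-- The affine coordinates of a rational point on a Weierstrass curve. -/
def coordsOf {F : Type*} [Field F] {W : Affine F} : W.Point → Set F
  | .zero => ∅
  | .some (x := x) (y := y) _ => {x, y}

end

/-! With `Δ = δ b²`, the entries of `σ_E` are `m = (a - δ b)/2`, `n b` with `n = δ(1 - δ)/4`,
`b` and `m + δ b`; they are integers because `a ≡ δ b mod 2` (from `a² - δ b² = 4|k|`) and
`δ ≡ 0, 1 mod 4`. Modulo `N` such a matrix is scalar iff `N` divides `n b`, `b` and `δ b`,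
that is, iff `N ∣ b`. -/

lemma Int.even_sub_mul_of_even_sq_sub_mul_sq {a b δ : ℤ} (h : Even (a ^ 2 - δ * b ^ 2)) :
    Even (a - δ * b) := by
  simp_all [Int.even_sub, Int.even_mul, Int.even_pow]

lemma Int.four_dvd_mul_one_sub {δ : ℤ} (hδ : δ % 4 = 0 ∨ δ % 4 = 1) : 4 ∣ δ * (1 - δ) := by
  rcases hδ with h | h
  · exact Dvd.dvd.mul_right (Int.dvd_of_emod_eq_zero h) _
  · exact Dvd.dvd.mul_left (Int.dvd_of_emod_eq_zero (by omega)) _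

lemma sigmaMat_eq_of_disc_eq_mul_sq {a b δ m n : ℤ} (hneg : δ * b ^ 2 < 0)
    (hm : a - δ * b = 2 * m) (hn : δ * (1 - δ) = 4 * n) :
    sigmaMat a (δ * b ^ 2) b = !![m, n * b; b, m + δ * b] := by
  have hb : b ≠ 0 := by rintro rfl; simp at hneg
  have h00 : (a * b - δ * b ^ 2) / (2 * b) = m :=
    Int.ediv_eq_of_eq_mul_right (by positivity) (by linear_combination b * hm)
  have h01 : δ * b ^ 2 * (b ^ 2 - δ * b ^ 2) / (4 * b ^ 3) = n * b :=
    Int.ediv_eq_of_eq_mul_right (by positivity) (by linear_combination b ^ 4 * hn)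
  have h11 : (a * b + δ * b ^ 2) / (2 * b) = m + δ * b :=
    Int.ediv_eq_of_eq_mul_right (by positivity) (by linear_combination b * hm)
  rw [sigmaMat, if_pos hneg, h00, h01, h11]

lemma exists_map_intCast_eq_smul_one_iff (N : ℕ) (x y z w : ℤ) :
    (∃ c : ZMod N, (!![x, y; z, w]).map (Int.cast : ℤ → ZMod N) = c • 1) ↔
      (N : ℤ) ∣ y ∧ (N : ℤ) ∣ z ∧ (N : ℤ) ∣ w - x := by
  simp only [← ZMod.intCast_zmod_eq_zero_iff_dvd, ← ZMod.intCast_eq_intCast_iff_dvd_sub x w]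
  constructor
  · rintro ⟨c, hc⟩
    obtain ⟨h00, h01, h10, h11⟩ : (x : ZMod N) = c ∧ (y : ZMod N) = 0 ∧ (z : ZMod N) = 0 ∧
        (w : ZMod N) = c := by
      simpa [← Matrix.ext_iff, Fin.forall_fin_two, and_assoc] using hc
    exact ⟨h01, h10, h00.trans h11.symm⟩
  · rintro ⟨hy, hz, hxw⟩
    refine ⟨x, ?_⟩
    ext i j
    fin_cases i <;> fin_cases j <;> simp [hy, hz, hxw.symm]

open Classical in
theorem sigmaMat_scalar_mod_N_iff_N_dvd_index_general
    (k : Type) [Field k] [Fintype k]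
    (E : WeierstrassCurve k)
    (hΔ : frobDisc k E < 0)
    (R : Type) [CommRing R] (π : R)
    (hb2 : ((frobIndex R π : ℤ)) ^ 2 ∣ frobDisc k E)
    (hδ : (frobDisc k E / (frobIndex R π : ℤ) ^ 2) % 4 = 0 ∨
      (frobDisc k E / (frobIndex R π : ℤ) ^ 2) % 4 = 1)
    (N : ℕ) :
    (∃ c : ZMod N,
        (sigmaMat (frobTrace k E) (frobDisc k E) (frobIndex R π)).map
          (Int.cast : ℤ → ZMod N) = c • (1 : Matrix (Fin 2) (Fin 2) (ZMod N))) ↔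
      N ∣ frobIndex R π := by
  set b : ℤ := (frobIndex R π : ℤ)
  set δ := frobDisc k E / b ^ 2
  have hΔ_eq : frobDisc k E = δ * b ^ 2 := (Int.ediv_mul_cancel hb2).symm
  obtain ⟨m, hm⟩ : Even (frobTrace k E - δ * b) :=
    Int.even_sub_mul_of_even_sq_sub_mul_sq ⟨2 * Fintype.card k, by
      rw [← hΔ_eq, frobDisc]; ring⟩
  obtain ⟨n, hn⟩ := Int.four_dvd_mul_one_sub hδ
  rw [hΔ_eq] at hΔ ⊢
  rw [sigmaMat_eq_of_disc_eq_mul_sq hΔ (by rw [hm]; ring) hn,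
    exists_map_intCast_eq_smul_one_iff, add_sub_cancel_left]
  constructor
  · exact fun ⟨_, hb, _⟩ => Int.natCast_dvd_natCast.mp hb
  · intro hN
    have hb : (N : ℤ) ∣ b := Int.natCast_dvd_natCast.mpr hN
    exact ⟨hb.mul_left n, hb, hb.mul_left δ⟩

open Classical in
/-- **from the proof of Corollary 6.3.** Let `E` be an elliptic curve over a
finite field `k` of characteristic `p` with `Δ_E < 0` (so that the endomorphism ring `R_E` is
an imaginary quadratic order of discriminant `δ = Δ_E / b_E²`), and `N` a positive integer
not divisible by `p`. Then `σ_E` reduces to a scalar matrix modulo `N` if and only if `N`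
divides `b_E`. -/
theorem sigmaMat_scalar_mod_N_iff_N_dvd_index
    (p r : ℕ) [Fact p.Prime] (hr : 0 < r)
    (k : Type) [Field k] [Fintype k] [CharP k p] (hcard : Fintype.card k = p ^ r)
    (E : WeierstrassCurve k) [E.IsElliptic]
    (hΔ : frobDisc k E < 0)
    (R : Type) [CommRing R] (π : R)
    (act : R →+* AddMonoid.End (Affine.Point (WeierstrassCurve.baseChange E (AlgebraicClosure k))))
    (hEnd : IsFrobEndRing p π act (frobPts p r k hcard E))
    (hb2 : ((frobIndex R π : ℤ)) ^ 2 ∣ frobDisc k E)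
    (hδ : (frobDisc k E / (frobIndex R π : ℤ) ^ 2) % 4 = 0 ∨
      (frobDisc k E / (frobIndex R π : ℤ) ^ 2) % 4 = 1)
    (N : ℕ) (hN : 0 < N) (hpN : ¬ p ∣ N) :
    (∃ c : ZMod N,
        (sigmaMat (frobTrace k E) (frobDisc k E) (frobIndex R π)).map
          (Int.cast : ℤ → ZMod N) = c • (1 : Matrix (Fin 2) (Fin 2) (ZMod N))) ↔
      N ∣ frobIndex R π :=
  sigmaMat_scalar_mod_N_iff_N_dvd_index_general k E hΔ R π hb2 hδ N
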